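/- Let B ≥ 1 and let a, b : ℕ → ℝ satisfy a 0 = 1, a n > 0 and max(a n, |b n|) ≤ B for all n ≥ 1. Then for every λ ∈ ℂ with Im λ > 0, the finite Weyl functions converge to the Weyl function of the semi-infinite Jacobi operator: m^N(λ) → m(λ) as N → ∞. -/

import Mathlib

/-!
Let `ψ = (H - λ)⁻¹e₁ ∈ ℓ²`. Its truncation to the first `N` coordinates solves the finite system
up to a single boundary term: `(H^N - λ)ψ = e₁ - a_N ψ_{N+1} e_N`. Hence
`m^N(λ) = ψ₁ + a_N ψ_{N+1} (H^N - λ)⁻¹_{1N}`. Symmetry of `H^N` gives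
`Im λ ‖x‖ ≤ ‖(H^N - λ)x‖`, so all entries of `(H^N - λ)⁻¹` are bounded by `1 / Im λ`; as the
`a_n` are bounded and `ψ_n → 0`, the error term vanishes and `m^N(λ) → ψ₁ = m(λ)`.
-/

open Filter

/-- The `N×N` Jacobi matrix with diagonal `b_1,…,b_N` and off-diagonal
`a_1,…,a_{N-1}`, viewed as a complex matrix. -/
def jacobiMatrix (N : ℕ) (a b : ℕ → ℝ) : Matrix (Fin N) (Fin N) ℂ :=
  Matrix.of fun i j =>
    if (i : ℕ) = (j : ℕ) then (b (i + 1) : ℂ)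
    else if (i : ℕ) + 1 = (j : ℕ) then (a ((i : ℕ) + 1) : ℂ)
    else if (j : ℕ) + 1 = (i : ℕ) then (a ((j : ℕ) + 1) : ℂ)
    else 0

/-- `H` acts as the semi-infinite Jacobi matrix on `ℓ²(ℕ, ℂ)` (here the
coordinate `n : ℕ` corresponds to the matrix index `n + 1 ≥ 1`):
`(Hψ)₁ = b₁ψ₁ + a₁ψ₂` and `(Hψ)ₙ = a_{n-1}ψ_{n-1} + b_nψ_n + a_nψ_{n+1}` for
`n ≥ 2`. -/
def IsJacobiOp (a b : ℕ → ℝ)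
    (H : lp (fun _ : ℕ => ℂ) 2 →L[ℂ] lp (fun _ : ℕ => ℂ) 2) : Prop :=
  ∀ ψ : lp (fun _ : ℕ => ℂ) 2,
    (H ψ) 0 = (b 1 : ℂ) * ψ 0 + (a 1 : ℂ) * ψ 1 ∧
    ∀ n : ℕ, 1 ≤ n →
      (H ψ) n = (a n : ℂ) * ψ (n - 1) + (b (n + 1) : ℂ) * ψ n
        + (a (n + 1) : ℂ) * ψ (n + 1)

open Matrix Topology

theorem LinearMap.IsSymmetric.abs_im_mul_norm_le_norm_sub_smul {E : Type*}
    [NormedAddCommGroup E] [InnerProductSpace ℂ E] {T : E →ₗ[ℂ] E} (hT : T.IsSymmetric)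
    (z : ℂ) (x : E) : |z.im| * ‖x‖ ≤ ‖T x - z • x‖ := by
  have him : (inner ℂ x (T x - z • x)).im = -(z.im * ‖x‖ ^ 2) := by
    have hreal : (inner ℂ x (T x)).im = 0 := hT.im_inner_self_apply x
    rw [inner_sub_right, inner_smul_right, Complex.sub_im, hreal, inner_self_eq_norm_sq_to_K]
    simp [← Complex.ofReal_pow]
  have key : |z.im| * ‖x‖ * ‖x‖ ≤ ‖T x - z • x‖ * ‖x‖ :=
    calc |z.im| * ‖x‖ * ‖x‖ = |(inner ℂ x (T x - z • x)).im| := by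
          rw [him, abs_neg, abs_mul, abs_of_nonneg (sq_nonneg ‖x‖)]; ring
      _ ≤ ‖inner ℂ x (T x - z • x)‖ := Complex.abs_im_le_norm _
      _ ≤ ‖T x - z • x‖ * ‖x‖ := by rw [mul_comm]; exact norm_inner_le_norm _ _
  rcases (norm_nonneg x).eq_or_lt with hx | hx
  · rw [← hx, mul_zero]; exact norm_nonneg _
  · exact le_of_mul_le_mul_right key hx

namespace Matrix

variable {n : Type*} [Fintype n] [DecidableEq n] {A : Matrix n n ℂ}

theorem IsHermitian.abs_im_mul_norm_le_norm_sub_smul_mulVec (hA : A.IsHermitian) (z : ℂ)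
    (v : n → ℂ) :
    |z.im| * ‖WithLp.toLp 2 v‖ ≤ ‖WithLp.toLp 2 ((A - z • 1) *ᵥ v)‖ := by
  have h := (isSymmetric_toEuclideanLin_iff.mpr hA).abs_im_mul_norm_le_norm_sub_smul z
    (WithLp.toLp 2 v)
  simpa [sub_mulVec, smul_mulVec] using h

theorem IsHermitian.isUnit_det_sub_smul (hA : A.IsHermitian) {z : ℂ} (hz : z.im ≠ 0) :
    IsUnit (A - z • 1).det := by
  rw [isUnit_iff_ne_zero]
  intro hdet
  obtain ⟨v, hv, hAv⟩ := exists_mulVec_eq_zero_iff.mpr hdet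
  have h := hA.abs_im_mul_norm_le_norm_sub_smul_mulVec z v
  rw [hAv, WithLp.toLp_zero, norm_zero] at h
  have : ‖WithLp.toLp 2 v‖ = 0 :=
    le_antisymm (nonpos_of_mul_nonpos_right h (abs_pos.mpr hz)) (norm_nonneg _)
  exact hv (by simpa using this)

theorem IsHermitian.norm_inv_sub_smul_apply_le (hA : A.IsHermitian) {z : ℂ} (hz : z.im ≠ 0)
    (i j : n) : ‖(A - z • 1)⁻¹ i j‖ ≤ |z.im|⁻¹ := by
  set v := (A - z • 1)⁻¹ *ᵥ Pi.single j 1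
  have hv : (A - z • 1) *ᵥ v = Pi.single j 1 := by
    rw [mulVec_mulVec, mul_nonsing_inv _ (hA.isUnit_det_sub_smul hz), one_mulVec]
  have h := hA.abs_im_mul_norm_le_norm_sub_smul_mulVec z v
  rw [hv] at h
  calc ‖(A - z • 1)⁻¹ i j‖ = ‖(WithLp.toLp 2 v) i‖ := by simp [v]
    _ ≤ ‖WithLp.toLp 2 v‖ := PiLp.norm_apply_le _ i
    _ ≤ |z.im|⁻¹ := by
      rw [← mul_one |z.im|⁻¹, le_inv_mul_iff₀ (abs_pos.mpr hz)]
      simpa using h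

end Matrix

/-- `(Hψ)ₙ` in the 0-based coordinates of `IsJacobiOp`. -/
def jacobiAction (a b : ℕ → ℝ) (ψ : ℕ → ℂ) (n : ℕ) : ℂ :=
  (if n = 0 then 0 else (a n : ℂ) * ψ (n - 1)) + (b (n + 1) : ℂ) * ψ n
    + (a (n + 1) : ℂ) * ψ (n + 1)

theorem IsJacobiOp.apply_eq {a b : ℕ → ℝ} {H : lp (fun _ : ℕ => ℂ) 2 →L[ℂ] lp (fun _ : ℕ => ℂ) 2}
    (hH : IsJacobiOp a b H) (ψ : lp (fun _ : ℕ => ℂ) 2) (n : ℕ) :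
    H ψ n = jacobiAction a b ψ n := by
  rcases Nat.eq_zero_or_pos n with rfl | hn
  · simp [jacobiAction, (hH ψ).1]
  · simp [jacobiAction, (hH ψ).2 n hn, hn.ne']

theorem jacobiMatrix_isHermitian (N : ℕ) (a b : ℕ → ℝ) : (jacobiMatrix N a b).IsHermitian := by
  ext i j
  simp only [conjTranspose_apply, jacobiMatrix, of_apply]
  split_ifs <;> first | (exfalso; omega) | simp_all [Complex.conj_ofReal]

theorem jacobiMatrix_mulVec_apply (N : ℕ) (a b : ℕ → ℝ) (ψ : ℕ → ℂ) (i : Fin N) :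
    (jacobiMatrix N a b *ᵥ fun j => ψ j) i
      = jacobiAction a b ψ i - if (i : ℕ) + 1 = N then (a N : ℂ) * ψ N else 0 := by
  set F : ℕ → ℂ := fun k => (if k = i then (b (i + 1) : ℂ) * ψ i else 0)
    + (if k = i + 1 then (a (i + 1) : ℂ) * ψ (i + 1) else 0)
    + (if k = i - 1 then (if (i : ℕ) = 0 then 0 else (a i : ℂ) * ψ (i - 1)) else 0) with hF
  have hentry : ∀ j : Fin N, jacobiMatrix N a b i j * ψ j = F j := by
    intro j
    simp only [jacobiMatrix, of_apply, hF]
    split_ifs <;> first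
      | (exfalso; omega)
      | (simp only [show (j : ℕ) = i by omega]; ring)
      | (simp only [show (j : ℕ) = i + 1 by omega]; ring)
      | (simp only [show (i : ℕ) = j + 1 by omega]; simp)
      | simp
  rw [mulVec, dotProduct, Finset.sum_congr rfl fun j _ => hentry j, Fin.sum_univ_eq_sum_range F]
  simp only [hF, Finset.sum_add_distrib, Finset.sum_ite_eq', Finset.mem_range, jacobiAction]
  by_cases hlast : (i : ℕ) + 1 = N
  · rw [hlast]
    split_ifs <;> first | (exfalso; omega) | ring
  · split_ifs <;> first | (exfalso; omega) | ring

theorem lp.tendsto_atTop_zero {E : Type*} [NormedAddCommGroup E] {p : ENNReal}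
    (hp : 0 < p.toReal) (f : lp (fun _ : ℕ => E) p) : Tendsto (fun n => f n) atTop (𝓝 0) := by
  have hpow : Tendsto (fun n => ‖f n‖ ^ p.toReal) atTop (𝓝 0) :=
    ((lp.memℓp f).summable hp).tendsto_atTop_zero
  refine tendsto_zero_iff_norm_tendsto_zero.mpr ?_
  simpa [Real.rpow_rpow_inv (norm_nonneg _) hp.ne'] using
    hpow.rpow_const_nhds_zero (inv_pos.mpr hp)

section WeylFunction

variable {a b : ℕ → ℝ} {z : ℂ} {ψ : ℕ → ℂ}

theorem jacobiMatrix_sub_smul_mulVec_eq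
    (hψ : ∀ n, jacobiAction a b ψ n - z * ψ n = (Pi.single 0 1 : ℕ → ℂ) n) (N : ℕ) :
    (jacobiMatrix (N + 1) a b - z • 1) *ᵥ (fun i : Fin (N + 1) => ψ i)
      = Pi.single 0 1 - ((a (N + 1) : ℂ) * ψ (N + 1)) • Pi.single (Fin.last N) 1 := by
  funext i
  rw [sub_mulVec, smul_mulVec, one_mulVec, Pi.sub_apply, jacobiMatrix_mulVec_apply, Pi.smul_apply,
    smul_eq_mul, sub_right_comm, hψ]
  simp only [Pi.sub_apply, Pi.smul_apply, Pi.single_apply, Fin.ext_iff, Fin.val_zero,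
    Fin.val_last, smul_eq_mul, Nat.add_right_cancel_iff]
  split_ifs <;> simp

theorem jacobiMatrix_sub_smul_inv_zero_zero (hz : z.im ≠ 0)
    (hψ : ∀ n, jacobiAction a b ψ n - z * ψ n = (Pi.single 0 1 : ℕ → ℂ) n) (N : ℕ) :
    (jacobiMatrix (N + 1) a b - z • 1)⁻¹ 0 0
      = ψ 0 + (a (N + 1) : ℂ) * ψ (N + 1)
          * (jacobiMatrix (N + 1) a b - z • 1)⁻¹ 0 (Fin.last N) := by
  set K := jacobiMatrix (N + 1) a b - z • 1
  have hunit : IsUnit K.det := (jacobiMatrix_isHermitian _ a b).isUnit_det_sub_smul hz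
  have hsol : (fun i : Fin (N + 1) => ψ i) = K⁻¹ *ᵥ (K *ᵥ fun i : Fin (N + 1) => ψ i) := by
    rw [mulVec_mulVec, nonsing_inv_mul _ hunit, one_mulVec]
  rw [jacobiMatrix_sub_smul_mulVec_eq hψ, mulVec_sub, mulVec_smul, mulVec_single_one,
    mulVec_single_one] at hsol
  have h0 := congrFun hsol 0
  simp only [Fin.coe_ofNat_eq_mod, Nat.zero_mod, Pi.sub_apply, col_apply, Pi.smul_apply,
    smul_eq_mul] at h0
  linear_combination -h0

theorem tendsto_jacobiMatrix_sub_smul_inv_zero_zero {B : ℝ} (ha : ∀ n, 1 ≤ n → |a n| ≤ B)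
    (hz : z.im ≠ 0) (hψ : ∀ n, jacobiAction a b ψ n - z * ψ n = (Pi.single 0 1 : ℕ → ℂ) n)
    (hψ_lim : Tendsto ψ atTop (𝓝 0)) :
    Tendsto (fun N => (jacobiMatrix (N + 1) a b - z • 1)⁻¹ 0 0) atTop (𝓝 (ψ 0)) := by
  simp_rw [jacobiMatrix_sub_smul_inv_zero_zero hz hψ]
  have hbound : ∀ N, ‖(a (N + 1) : ℂ) * ψ (N + 1)
      * (jacobiMatrix (N + 1) a b - z • 1)⁻¹ 0 (Fin.last N)‖ ≤ B * |z.im|⁻¹ * ‖ψ (N + 1)‖ := by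
    intro N
    rw [norm_mul, norm_mul, Complex.norm_real, Real.norm_eq_abs, mul_right_comm]
    have hB : 0 ≤ B := (abs_nonneg _).trans (ha 1 le_rfl)
    gcongr
    · exact ha _ N.succ_pos
    · exact (jacobiMatrix_isHermitian _ a b).norm_inv_sub_smul_apply_le hz _ _
  have herr := (hψ_lim.comp (tendsto_add_atTop_nat 1)).norm.const_mul (B * |z.im|⁻¹)
  rw [norm_zero, mul_zero] at herr
  simpa using tendsto_const_nhds.add (squeeze_zero_norm hbound herr)

end WeylFunction

theorem finite_weyl_functions_tendsto_general
    (B : ℝ) (a b : ℕ → ℝ)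
    (hapos : ∀ n, 1 ≤ n → 0 < a n)
    (hbound : ∀ n, 1 ≤ n → max (a n) |b n| ≤ B)
    (H : lp (fun _ : ℕ => ℂ) 2 →L[ℂ] lp (fun _ : ℕ => ℂ) 2)
    (hH : IsJacobiOp a b H)
    (lam : ℂ) (hlam : 0 < lam.im)
    (T : lp (fun _ : ℕ => ℂ) 2 →L[ℂ] lp (fun _ : ℕ => ℂ) 2)
    (hT1 : ∀ ψ, H (T ψ) - lam • T ψ = ψ) :
    Tendsto (fun N : ℕ => (jacobiMatrix (N + 1) a b - lam • 1)⁻¹ 0 0) atTop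
      (nhds (inner (𝕜 := ℂ) (lp.single 2 (0 : ℕ) (1 : ℂ))
        (T (lp.single 2 (0 : ℕ) (1 : ℂ))))) := by
  set e₁ : lp (fun _ : ℕ => ℂ) 2 := lp.single 2 0 1
  have ha : ∀ n, 1 ≤ n → |a n| ≤ B := fun n hn =>
    (abs_of_pos (hapos n hn)).trans_le ((le_max_left _ _).trans (hbound n hn))
  have hrec : ∀ n, jacobiAction a b (T e₁) n - lam * T e₁ n = (Pi.single 0 1 : ℕ → ℂ) n := by
    intro n
    rw [← hH.apply_eq]
    exact congrArg (fun ψ : lp (fun _ : ℕ => ℂ) 2 => ψ n) (hT1 e₁)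
  have hinner : inner ℂ e₁ (T e₁) = T e₁ 0 := by simp [e₁, lp.inner_single_left]
  rw [hinner]
  exact tendsto_jacobiMatrix_sub_smul_inv_zero_zero ha hlam.ne' hrec
    (lp.tendsto_atTop_zero (by norm_num) (T e₁))

/-- For `Im λ > 0` the finite Weyl functions `m^N(λ) = ((H^N - λ)⁻¹e₁, e₁)`
converge, as `N → ∞`, to the Weyl function `m(λ) = ⟨(H-λ)⁻¹e₁, e₁⟩` of the
semi-infinite Jacobi operator (here `T = (H-λ)⁻¹` is any bounded two-sided
inverse of `H - λ`). -/
theorem finite_weyl_functions_tendsto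
    (B : ℝ) (hB : 1 ≤ B) (a b : ℕ → ℝ) (ha0 : a 0 = 1)
    (hapos : ∀ n, 1 ≤ n → 0 < a n)
    (hbound : ∀ n, 1 ≤ n → max (a n) |b n| ≤ B)
    (H : lp (fun _ : ℕ => ℂ) 2 →L[ℂ] lp (fun _ : ℕ => ℂ) 2)
    (hH : IsJacobiOp a b H)
    (lam : ℂ) (hlam : 0 < lam.im)
    (T : lp (fun _ : ℕ => ℂ) 2 →L[ℂ] lp (fun _ : ℕ => ℂ) 2)
    (hT1 : ∀ ψ, H (T ψ) - lam • T ψ = ψ)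
    (hT2 : ∀ ψ, T (H ψ - lam • ψ) = ψ) :
    Tendsto (fun N : ℕ => (jacobiMatrix (N + 1) a b - lam • 1)⁻¹ 0 0) atTop
      (nhds (inner (𝕜 := ℂ) (lp.single 2 (0 : ℕ) (1 : ℂ))
        (T (lp.single 2 (0 : ℕ) (1 : ℂ))))) :=
  finite_weyl_functions_tendsto_general B a b hapos hbound H hH lam hlam T hT1
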